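/- Let A be a commutative ring and M an A-module such that the homothety map A → End_A(M) sending a to the endomorphism (m ↦ a•m) is bijective. Let T = A ⋉ M be the trivial square-zero extension, and equip E = Hom_A(T, M) (A-linear maps from T to M) with the T-module structure given by (r·ε)(x) = ε(x·r) for r, x ∈ T and ε ∈ E. Then the map φ : T → E defined by φ(a, m) = ((a', m') ↦ a'•m + a•m') is an isomorphism of T-modules. -/
import Mathlib


/-!
STATEMENT 3: Let `A` be a commutative ring and `M` an `A`-module whose homothety map
`A → End_A(M)` is bijective.  Let `T = A ⋉ M` and equip `E = Hom_A(T, M)` with the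
`T`-module structure `(r • ε) (x) = ε (x * r)`.  Then the map
`φ : T → E`, `φ (a, m) = ((a', m') ↦ a' • m + a • m')`, is an isomorphism of `T`-modules.
-/

universe u

variable (A : Type u) [CommRing A]
  (M : Type u) [AddCommGroup M] [Module A M] [Module Aᵐᵒᵖ M] [IsCentralScalar A M]

/-- The action of `T = A ⋉ M` on `E = Hom_A(T, M)` given by `(r • ε) (x) = ε (x * r)`. -/
noncomputable instance homTrivSqZeroExtSMul :
    SMul (TrivSqZeroExt A M) (TrivSqZeroExt A M →ₗ[A] M) :=
  ⟨fun r ε => ε ∘ₗ LinearMap.mulRight A r⟩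

theorem homTrivSqZeroExt_smul_apply (r : TrivSqZeroExt A M)
    (ε : TrivSqZeroExt A M →ₗ[A] M) (x : TrivSqZeroExt A M) :
    (r • ε) x = ε (x * r) :=
  rfl

/-- The `T`-module structure on `E = Hom_A(T, M)` given by `(r • ε) (x) = ε (x * r)`. -/
noncomputable instance homTrivSqZeroExtModule :
    Module (TrivSqZeroExt A M) (TrivSqZeroExt A M →ₗ[A] M) where
  one_smul ε := by
    ext x
    rw [homTrivSqZeroExt_smul_apply, mul_one]
  mul_smul r s ε := by
    ext x
    rw [homTrivSqZeroExt_smul_apply, homTrivSqZeroExt_smul_apply,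
      homTrivSqZeroExt_smul_apply, mul_assoc]
  smul_zero r := by
    ext x
    rw [homTrivSqZeroExt_smul_apply]
    rfl
  smul_add r ε ε' := by
    ext x
    rw [homTrivSqZeroExt_smul_apply]
    show (ε + ε') (x * r) = ε (x * r) + ε' (x * r)
    rfl
  add_smul r s ε := by
    ext x
    rw [homTrivSqZeroExt_smul_apply]
    show ε (x * (r + s)) = (r • ε) x + (s • ε) x
    rw [homTrivSqZeroExt_smul_apply, homTrivSqZeroExt_smul_apply, mul_add, map_add]
  zero_smul ε := by
    ext x
    rw [homTrivSqZeroExt_smul_apply, mul_zero, map_zero]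
    rfl

theorem trivSqZeroExt_hom_iso
    (h : Function.Bijective (LinearMap.lsmul A M)) :
    ∃ φ : TrivSqZeroExt A M ≃ₗ[TrivSqZeroExt A M]
        (TrivSqZeroExt A M →ₗ[A] M),
      ∀ x y : TrivSqZeroExt A M,
        φ x y = y.fst • x.snd + x.fst • y.snd := by
  classical
  -- the underlying T-linear map
  let f : TrivSqZeroExt A M →ₗ[TrivSqZeroExt A M] (TrivSqZeroExt A M →ₗ[A] M) :=
    { toFun := fun x =>
        { toFun := fun y => y.fst • x.snd + x.fst • y.snd
          map_add' := by
            intro y z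
            simp [smul_add, add_smul]
            abel
          map_smul' := by
            intro a y
            simp only [TrivSqZeroExt.fst_smul, TrivSqZeroExt.snd_smul, smul_add,
              smul_assoc, RingHom.id_apply]
            rw [smul_comm x.fst a] }
      map_add' := by
        intro x z
        ext y
        simp [smul_add, add_smul]
        abel
      map_smul' := by
        intro r x
        ext y
        rw [RingHom.id_apply, homTrivSqZeroExt_smul_apply]
        show y.fst • (r • x).snd + (r • x).fst • y.snd =
          (y * r).fst • x.snd + x.fst • (y * r).snd
        rw [smul_eq_mul]
        simp [TrivSqZeroExt.snd_mul, smul_add, smul_smul, mul_comm, op_smul_eq_smul]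
        abel }
  have hf : Function.Bijective f := by
    constructor
    · intro x z hxz
      have h1 : f x (1 : TrivSqZeroExt A M) = f z 1 := by rw [hxz]
      have h2 : ∀ m : M, f x (TrivSqZeroExt.inr m) = f z (TrivSqZeroExt.inr m) := by
        intro m; rw [hxz]
      simp only [f, LinearMap.coe_mk, AddHom.coe_mk, TrivSqZeroExt.fst_one,
        TrivSqZeroExt.snd_one, TrivSqZeroExt.fst_inr, TrivSqZeroExt.snd_inr,
        one_smul, smul_zero, add_zero, zero_smul, zero_add] at h1 h2
      have hfst : x.fst = z.fst := h.injective (by ext m; exact h2 m)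
      exact TrivSqZeroExt.ext hfst h1
    · intro ε
      obtain ⟨a, ha⟩ := h.surjective (ε ∘ₗ TrivSqZeroExt.inrHom A M)
      refine ⟨⟨a, ε 1⟩, ?_⟩
      ext y
      show y.fst • ε 1 + a • y.snd = ε y
      have h1 : a • y.snd = ε (TrivSqZeroExt.inr y.snd) := by
        have := congrArg (fun g : M →ₗ[A] M => g y.snd) ha
        simpa using this
      have h2 : y.fst • ε 1 = ε (TrivSqZeroExt.inl y.fst) := by
        rw [← map_smul]
        congr 1
        ext <;> simp [TrivSqZeroExt.inl]
      rw [h1, h2, ← map_add]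
      congr 1
      ext <;> simp
  refine ⟨LinearEquiv.ofBijective f hf, fun x y => rfl⟩
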